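/- arXiv:1407.5578 — 2 statements merged into one kernel-verified Lean document; each statement's English description precedes it below -/
import Mathlib

section
/- Let A be an abelian group and a₁, ..., a_{r-1} ∈ A generating a subgroup Λ. Set a_r := -a₁ - ⋯ - a_{r-1}. For a ∈ A define Λ*_a := {s ∈ A : ∃ m, n ∈ ℤ \ {0}, n·s = m·a}. Then the division group Λ' := {s ∈ A : ∃ n ≥ 1, n·s ∈ Λ} satisfies Λ' = Λ*_{a₁} + ⋯ + Λ*_{a_r}, provided A is divisible. -/
/-- Pink's Lemma 5.3: in a divisible abelian group `A`, with
`Λ = ⟨a₁, …, a_{r-1}⟩` and `a_r = -a₁ - ⋯ - a_{r-1}`, the division group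
`Λ' = {s : ∃ n ≥ 1, n·s ∈ Λ}` equals `Λ*_{a₁} + ⋯ + Λ*_{a_r}` where
`Λ*_a = {s : ∃ m,n ∈ ℤ∖{0}, n·s = m·a}`. -/
theorem stmt6 (A : Type*) [AddCommGroup A] [DivisibleBy A ℕ]
    (r : ℕ) (hr : 1 ≤ r) (a : Fin r → A)
    (hlast : a ⟨r - 1, by omega⟩ =
      - ∑ i ∈ Finset.univ.filter (fun i : Fin r => (i : ℕ) < r - 1), a i) :
    {s : A | ∃ n : ℕ, 1 ≤ n ∧
        n • s ∈ AddSubgroup.closure (a '' {i : Fin r | (i : ℕ) < r - 1})} =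
      {s : A | ∃ c : Fin r → A,
        (∀ i, ∃ m n : ℤ, m ≠ 0 ∧ n ≠ 0 ∧ n • c i = m • a i) ∧ s = ∑ i, c i} := by
  set T : Finset (Fin r) := Finset.univ.filter (fun i : Fin r => (i : ℕ) < r - 1) with hT
  have hlast' : ∀ i : Fin r, i ∉ T → i = ⟨r - 1, by omega⟩ := by
    intro i hi
    simp only [hT, Finset.mem_filter, Finset.mem_univ, true_and, not_lt] at hi
    exact Fin.ext (by simp only []; omega)
  ext s
  simp only [Set.mem_setOf_eq]
  constructor
  · rintro ⟨n, hn, hmem⟩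
    rw [← Submodule.span_int_eq_addSubgroupClosure, Submodule.mem_toAddSubgroup,
      Finsupp.mem_span_image_iff_linearCombination] at hmem
    obtain ⟨l, hl, hsum⟩ := hmem
    -- coefficients
    set k : ℤ := 1 + ∑ i, |l i| with hk
    have hkpos : ∀ i : Fin r, 0 < l i + k := by
      intro i
      have h1 : |l i| ≤ ∑ j, |l j| := Finset.single_le_sum (f := fun j => |l j|)
        (fun j _ => abs_nonneg _) (Finset.mem_univ i)
      have h2 : -l i ≤ |l i| := neg_le_abs _
      omega
    have hne : n ≠ 0 := by omega
    have hn0 : (n : ℤ) ≠ 0 := by exact_mod_cast hne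
    set t : Fin r → A := fun i => DivisibleBy.div (a i) n with ht
    have htt : ∀ i, (n : ℤ) • t i = a i := by
      intro i
      have := DivisibleBy.div_cancel (n := n) (a i) hne
      rw [natCast_zsmul]
      exact this
    -- n • s = ∑ i ∈ T, l i • a i
    have hns : (n : ℤ) • s = ∑ i ∈ T, l i • a i := by
      have : Finsupp.linearCombination ℤ a l = ∑ i ∈ T, l i • a i := by
        rw [Finsupp.linearCombination_apply, Finsupp.sum]
        apply Finset.sum_subset
        · intro j hj
          have := (Finsupp.mem_supported ℤ l).mp hl hj
          simp only [Set.mem_setOf_eq] at this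
          simp [hT, this]
        · intro i _ hi
          simp [Finsupp.notMem_support_iff.mp hi]
      rw [← this, hsum, natCast_zsmul]
    refine ⟨fun i => if (i : ℕ) < r - 1 then (l i + k) • t i
      else s - ∑ j ∈ T, (l j + k) • t j, ?_, ?_⟩
    · intro i
      by_cases hi : (i : ℕ) < r - 1
      · refine ⟨l i + k, n, (hkpos i).ne', hn0, ?_⟩
        simp only [hi, if_true]
        rw [smul_comm, htt]
      · refine ⟨k, n, ?_, hn0, ?_⟩
        · have := hkpos i; positivity
        · simp only [hi, if_false]
          have hiT : i ∉ T := by simp [hT, hi]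
          have hieq := hlast' i hiT
          rw [smul_sub, hns, Finset.smul_sum]
          have : ∀ j ∈ T, (n : ℤ) • (l j + k) • t j = (l j + k) • a j := by
            intro j _
            rw [smul_comm, htt]
          rw [Finset.sum_congr rfl this, hieq, hlast, smul_neg, Finset.smul_sum,
            ← Finset.sum_neg_distrib, ← Finset.sum_sub_distrib]
          apply Finset.sum_congr rfl
          intro j hj
          rw [add_smul]
          abel
    · -- s = ∑ c i
      have hsplit : (Finset.univ : Finset (Fin r)) = T ∪ {⟨r - 1, by omega⟩} := by
        ext i
        simp only [Finset.mem_univ, Finset.mem_union, Finset.mem_singleton, true_iff]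
        by_cases h : i ∈ T
        · exact Or.inl h
        · exact Or.inr (hlast' i h)
      have hdisj : Disjoint T ({⟨r - 1, by omega⟩} : Finset (Fin r)) := by
        simp only [Finset.disjoint_singleton_right, hT, Finset.mem_filter, Finset.mem_univ,
          true_and]
        omega
      rw [hsplit, Finset.sum_union hdisj]
      have h1 : ∀ j ∈ T, (if (j : ℕ) < r - 1 then (l j + k) • t j
          else s - ∑ j ∈ T, (l j + k) • t j) = (l j + k) • t j := by
        intro j hj
        simp only [hT, Finset.mem_filter] at hj
        simp [hj.2]
      rw [Finset.sum_congr rfl h1, Finset.sum_singleton]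
      simp only [show ¬((r : ℕ) - 1 < r - 1) from lt_irrefl _, if_false]
      abel
  · rintro ⟨c, hc, rfl⟩
    choose m nn hm hnn hrel using hc
    set N : ℤ := ∏ i, nn i with hN
    have hN0 : N ≠ 0 := Finset.prod_ne_zero_iff.mpr fun i _ => hnn i
    have haΛ : ∀ i, a i ∈ AddSubgroup.closure (a '' {i : Fin r | (i : ℕ) < r - 1}) := by
      intro i
      by_cases hi : (i : ℕ) < r - 1
      · exact AddSubgroup.subset_closure ⟨i, hi, rfl⟩
      · have := hlast' i (by simp [hT, hi])
        rw [this, hlast]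
        refine neg_mem (AddSubgroup.sum_mem _ fun j hj => ?_)
        simp only [hT, Finset.mem_filter, Finset.mem_univ, true_and] at hj
        exact AddSubgroup.subset_closure ⟨j, hj, rfl⟩
    refine ⟨N.natAbs, Nat.pos_of_ne_zero (Int.natAbs_ne_zero.mpr hN0), ?_⟩
    have key : N • ∑ i, c i ∈ AddSubgroup.closure (a '' {i : Fin r | (i : ℕ) < r - 1}) := by
      rw [Finset.smul_sum]
      refine AddSubgroup.sum_mem _ fun i _ => ?_
      have hprod : N = (∏ j ∈ Finset.univ.erase i, nn j) * nn i := by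
        rw [hN, ← Finset.prod_erase_mul _ _ (Finset.mem_univ i)]
      rw [hprod, mul_smul, hrel i]
      exact AddSubgroup.zsmul_mem _ (AddSubgroup.zsmul_mem _ (haΛ i) _) _
    have : (N.natAbs : ℤ) • ∑ i, c i ∈ AddSubgroup.closure (a '' {i : Fin r | (i : ℕ) < r - 1}) := by
      rcases Int.natAbs_eq N with h | h
      · rw [← h]; exact key
      · rw [show (N.natAbs : ℤ) = -N by omega, neg_smul]
        exact neg_mem key
    rw [← natCast_zsmul]
    exact this
end

section
/- Let Λ be a subgroup of an abelian group A, let Λ' ⊇ Λ be a subgroup with [Λ' : Λ] = c < ∞. Fix t in some abelian group B and a homomorphism f : A → B. Define n_t := min{n ≥ 1 : n·t ∈ f(Λ + T)} and n'_t := min{n ≥ 1 : n·t ∈ f(Λ' + T)}, where T is the torsion subgroup of A, and assume both minima exist. Then n_t ≤ c · n'_t. -/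
/-!
Multiplying by `c = [Λ' : Λ]` sends `Λ'` into `Λ` and `T` into itself, hence `Λ' + T` into `Λ + T`.
So if `n'_t • t = f x` with `x ∈ Λ' + T`, then `(c * n'_t) • t = f (c • x)` lies in `f(Λ + T)`,
and minimality of `n_t` gives `n_t ≤ c * n'_t`.
-/

@[to_additive]
theorem Subgroup.pow_relIndex_mem_sup {G : Type*} [CommGroup G] {H K L : Subgroup G} {g : G}
    (hg : g ∈ K ⊔ L) : g ^ H.relIndex K ∈ H ⊔ L := by
  obtain ⟨k, hk, l, hl, rfl⟩ := Subgroup.mem_sup.mp hg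
  rw [mul_pow]
  exact Subgroup.mul_mem_sup (H.pow_relIndex_mem hk) (L.pow_mem hl _)

theorem stmt14_general (A B : Type*) [AddCommGroup A] [AddCommGroup B]
    (Λ Λ' : AddSubgroup A)
    (T : AddSubgroup A)
    (c : ℕ) (hc : 0 < c) (hidx : AddSubgroup.relIndex Λ Λ' = c)
    (f : A →+ B) (t : B) (nt nt' : ℕ)
    (hnt'1 : 1 ≤ nt')
    (hmin : ∀ m : ℕ, 1 ≤ m → m • t ∈ AddSubgroup.map f (Λ ⊔ T) → nt ≤ m)
    (hmem' : nt' • t ∈ AddSubgroup.map f (Λ' ⊔ T)) :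
    nt ≤ c * nt' := by
  apply hmin (c * nt') (Nat.one_le_iff_ne_zero.mpr (by positivity))
  obtain ⟨x, hx, hfx⟩ := hmem'
  refine ⟨c • x, ?_, by rw [map_nsmul, hfx, mul_smul]⟩
  exact hidx ▸ AddSubgroup.nsmul_relIndex_mem_sup hx

/-- inequality (7.9): comparing minimal denominators with
respect to a subgroup `Λ` and a finite-index overgroup `Λ'`: if
`n_t = min{n ≥ 1 : n·t ∈ f(Λ + T)}` and `n'_t = min{n ≥ 1 : n·t ∈ f(Λ' + T)}`,
`T` the torsion subgroup of `A`, and `[Λ' : Λ] = c < ∞`, then `n_t ≤ c · n'_t`. -/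
theorem stmt14 (A B : Type*) [AddCommGroup A] [AddCommGroup B]
    (Λ Λ' : AddSubgroup A) (hΛΛ' : Λ ≤ Λ')
    (T : AddSubgroup A) (hT : ∀ x : A, x ∈ T ↔ IsOfFinAddOrder x)
    (c : ℕ) (hc : 0 < c) (hidx : AddSubgroup.relIndex Λ Λ' = c)
    (f : A →+ B) (t : B) (nt nt' : ℕ)
    (hnt1 : 1 ≤ nt) (hnt'1 : 1 ≤ nt')
    (hmem : nt • t ∈ AddSubgroup.map f (Λ ⊔ T))
    (hmin : ∀ m : ℕ, 1 ≤ m → m • t ∈ AddSubgroup.map f (Λ ⊔ T) → nt ≤ m)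
    (hmem' : nt' • t ∈ AddSubgroup.map f (Λ' ⊔ T))
    (hmin' : ∀ m : ℕ, 1 ≤ m → m • t ∈ AddSubgroup.map f (Λ' ⊔ T) → nt' ≤ m) :
    nt ≤ c * nt' :=
  stmt14_general A B Λ Λ' T c hc hidx f t nt nt' hnt'1 hmin hmem'
end
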